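/- Let d ∈ ℕ, 2 ≤ p < ∞, 2 ≤ θ ≤ ∞ and r ≥ 0. Then there is a constant C > 0 such that for every f ∈ S^{r+1−1/p−1/θ}_θ A one has ‖f‖_{S^r_{p,θ}B} ≤ C · ‖f‖_{S^{r+1−1/p−1/θ}_θ A}, i.e. S^{r+1−1/p−1/θ}_θ A ↪ S^r_{p,θ}B. -/

import Mathlib

open MeasureTheory Real ENNReal

noncomputable section

namespace Paper

/-- The fundamental domain `[0,1)^d` of the `d`-dimensional torus `𝕋^d`. -/
def cube (d : ℕ) : Set (Fin d → ℝ) := Set.univ.pi fun _ => Set.Ico (0:ℝ) 1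

/-- The trigonometric character `x ↦ e^{2π i k·x}`. -/
def expk (d : ℕ) (k : Fin d → ℤ) (x : Fin d → ℝ) : ℂ :=
  Complex.exp (((2 * Real.pi * ∑ i, (k i : ℝ) * x i : ℝ) : ℂ) * Complex.I)

/-- Fourier coefficient `f̂(k) = ∫_{[0,1)^d} f(x) e^{-2π i k·x} dx`. -/
def fCoeff (d : ℕ) (f : (Fin d → ℝ) → ℂ) (k : Fin d → ℤ) : ℂ :=
  ∫ x in cube d, f x * expk d (-k) x

/-- The `L_q` (quasi-)norm on the torus, `q ∈ (0,∞]`, valued in `ℝ≥0∞`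
(for `q = ∞` this is the essential supremum). -/
def LqNorm (d : ℕ) (q : ℝ≥0∞) (f : (Fin d → ℝ) → ℂ) : ℝ≥0∞ :=
  eLpNorm f q (volume.restrict (cube d))

/-- The weight `∏_{i=1}^d (1+|k_i|)`. -/
def wt (d : ℕ) (k : Fin d → ℤ) : ℝ := ∏ i, (1 + |(k i : ℝ)|)

/-- The weighted Wiener (quasi-)norm `‖f‖_{S^r_θ A}`
(with the sup modification for `θ = ∞`); `A_θ` corresponds to `r = 0`,
the Wiener algebra `A` to `r = 0`, `θ = 1`. -/
def wienerNorm (d : ℕ) (r : ℝ) (θ : ℝ≥0∞) (f : (Fin d → ℝ) → ℂ) : ℝ≥0∞ :=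
  if θ = ∞ then ⨆ k : Fin d → ℤ, ENNReal.ofReal (wt d k ^ r) * (‖fCoeff d f k‖₊ : ℝ≥0∞)
  else (∑' k : Fin d → ℤ,
      (ENNReal.ofReal (wt d k ^ r) * (‖fCoeff d f k‖₊ : ℝ≥0∞)) ^ θ.toReal) ^ (1 / θ.toReal)

/-- Trigonometric polynomials with at most `m` terms. -/
def trigPoly (d m : ℕ) : Set ((Fin d → ℝ) → ℂ) :=
  {s | ∃ (Λ : Finset (Fin d → ℤ)) (a : (Fin d → ℤ) → ℂ),
    Λ.card ≤ m ∧ s = fun x => ∑ k ∈ Λ, a k * expk d k x}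

/-- Best `m`-term trigonometric approximation error of `f`, error measured by `X`. -/
def sigmaF (d m : ℕ) (X : ((Fin d → ℝ) → ℂ) → ℝ≥0∞) (f : (Fin d → ℝ) → ℂ) : ℝ≥0∞ :=
  ⨅ s ∈ trigPoly d m, X (f - s)

/-- The unit ball of the space (inside `L₁(𝕋^d)`) with (quasi-)norm `N`. -/
def unitBall (d : ℕ) (N : ((Fin d → ℝ) → ℂ) → ℝ≥0∞) : Set ((Fin d → ℝ) → ℂ) :=
  {f | IntegrableOn f (cube d) ∧ N f ≤ 1}

/-- Best `m`-term trigonometric width of the unit ball of `N`, error measured by `X`. -/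
def sigmaClass (d m : ℕ) (N X : ((Fin d → ℝ) → ℂ) → ℝ≥0∞) : ℝ≥0∞ :=
  ⨆ f ∈ unitBall d N, sigmaF d m X f

/-- `log*(m) = max (log₂ m) 1`. -/
def logStar (m : ℕ) : ℝ := max (Real.logb 2 m) 1

/-- Two-sided asymptotic equivalence `a_m ≍ b_m`. -/
def IsAsympEquiv (a : ℕ → ℝ≥0∞) (b : ℕ → ℝ) : Prop :=
  ∃ c C : ℝ, 0 < c ∧ 0 < C ∧ ∃ m₀ : ℕ, ∀ m : ℕ, m₀ ≤ m →
    ENNReal.ofReal (c * b m) ≤ a m ∧ a m ≤ ENNReal.ofReal (C * b m)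

/-- One-sided asymptotic bound `a_m ≲ b_m`. -/
def IsAsympLe (a : ℕ → ℝ≥0∞) (b : ℕ → ℝ) : Prop :=
  ∃ C : ℝ, 0 < C ∧ ∃ m₀ : ℕ, ∀ m : ℕ, m₀ ≤ m → a m ≤ ENNReal.ofReal (C * b m)

/-- Dyadic block `I_0 = {0}`, `I_n = {k : 2^{n-1} ≤ |k| < 2^n}` for `n ≥ 1`. -/
def blockF (n : ℕ) : Finset ℤ :=
  (Finset.Icc (-(2^n : ℤ)) (2^n)).filter fun k =>
    (n = 0 ∧ k = 0) ∨ (n ≠ 0 ∧ 2^(n-1) ≤ |k| ∧ |k| < 2^n)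

/-- The dyadic block projection `∑_{k ∈ I_j} f̂(k) e^{2π i k·x}`. -/
def blockProj (d : ℕ) (f : (Fin d → ℝ) → ℂ) (j : Fin d → ℕ) : (Fin d → ℝ) → ℂ :=
  fun x => ∑ k ∈ Fintype.piFinset (fun i => blockF (j i)), fCoeff d f k * expk d k x

/-- The mixed-smoothness Besov (quasi-)norm `‖f‖_{S^s_{p,θ}B}`
(with the sup modification for `θ = ∞`). -/
def besovNorm (d : ℕ) (s : ℝ) (p θ : ℝ≥0∞) (f : (Fin d → ℝ) → ℂ) : ℝ≥0∞ :=
  if θ = ∞ then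
    ⨆ j : Fin d → ℕ,
      ENNReal.ofReal ((2:ℝ) ^ (((∑ i, j i : ℕ) : ℝ) * s)) * LqNorm d p (blockProj d f j)
  else
    (∑' j : Fin d → ℕ,
      (ENNReal.ofReal ((2:ℝ) ^ (((∑ i, j i : ℕ) : ℝ) * s)) * LqNorm d p (blockProj d f j))
        ^ θ.toReal) ^ (1 / θ.toReal)

/-- The mixed-smoothness Sobolev norm `‖f‖_{S^s_p W}` (Littlewood–Paley form),
with `S^0_p W := L_p`. -/
def sobolevNorm (d : ℕ) (s : ℝ) (p : ℝ≥0∞) (f : (Fin d → ℝ) → ℂ) : ℝ≥0∞ :=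
  if s = 0 then LqNorm d p f
  else
    (∫⁻ x in cube d,
      ((∑' j : Fin d → ℕ,
        (ENNReal.ofReal ((2:ℝ) ^ (((∑ i, j i : ℕ) : ℝ) * s)) *
          (‖blockProj d f j x‖₊ : ℝ≥0∞)) ^ (2:ℕ)) ^ ((1:ℝ)/2)) ^ p.toReal) ^ (1 / p.toReal)

/-- Trigonometric polynomials with frequencies in `[-M,M]^d`. -/
def boxPoly (d M : ℕ) : Set ((Fin d → ℝ) → ℂ) :=
  {s | ∃ (Λ : Finset (Fin d → ℤ)) (a : (Fin d → ℤ) → ℂ),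
    (∀ k ∈ Λ, ∀ i, |k i| ≤ (M : ℤ)) ∧ s = fun x => ∑ k ∈ Λ, a k * expk d k x}

/-- Error of best approximation by trigonometric polynomials with
frequencies in `[-M,M]^d`, measured in `L_∞`. -/
def EBox (d M : ℕ) (f : (Fin d → ℝ) → ℂ) : ℝ≥0∞ :=
  ⨅ g ∈ boxPoly d M, LqNorm d ∞ (f - g)

/-- The `m`-th (non-linear) sampling width of the class of continuous functions
in the unit ball of `N`, error measured in `L_q`. -/
def samplingWidth (d m : ℕ) (N : ((Fin d → ℝ) → ℂ) → ℝ≥0∞) (q : ℝ≥0∞) : ℝ≥0∞ :=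
  ⨅ (t : Fin m → (Fin d → ℝ)) (_ : ∀ i, t i ∈ cube d)
    (R : (Fin m → ℂ) → ((Fin d → ℝ) → ℂ)),
    ⨆ f ∈ {f : (Fin d → ℝ) → ℂ | Continuous f ∧ N f ≤ 1},
      LqNorm d q (f - R fun i => f (t i))

/-!
Fix a dyadic block `I_j`, which has `N ≤ 2^(|j|₁ + 2d)` frequencies. For a trigonometric
polynomial `t` with coefficients `a` on `I_j`, `‖t‖_p ≤ ‖t‖_∞^(1-2/p) ‖t‖_2^(2/p)`, and
`‖t‖_∞ ≤ ‖a‖_1`, `‖t‖_2 = ‖a‖_2` (Parseval); Hölder on the `N` coefficients then gives the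
Nikol'skii-type bound `‖t‖_p ≤ N^(1-1/p-1/θ) ‖a‖_θ`. On `I_j` the weight `∏ (1 + |k_i|)` is at
least `2^(|j|₁ - d)`, so the loss `N^(1-1/p-1/θ)` is paid for by the extra smoothness
`1 - 1/p - 1/θ` of the Wiener norm, uniformly in `j`. As the blocks partition `ℤ^d`, the
`ℓ^θ`-sum over `j` of the blockwise `ℓ^θ`-norms of the weighted coefficients is the Wiener norm.
-/

lemma one_div_toReal_le_half {q : ℝ≥0∞} (hq : 2 ≤ q) : 1 / q.toReal ≤ 1 / 2 := by
  rcases eq_or_ne q ∞ with rfl | hq'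
  · norm_num
  · exact one_div_le_one_div_of_le two_pos (by simpa using ENNReal.toReal_mono hq' hq)

lemma ofReal_two_rpow (x : ℝ) : ENNReal.ofReal ((2:ℝ) ^ x) = 2 ^ x := by
  rw [← ENNReal.ofReal_rpow_of_pos two_pos, ENNReal.ofReal_ofNat]

lemma mul_rpow_mul_mul_rpow (X N : ℝ≥0∞) {a b c e : ℝ} (ha : 0 ≤ a) (hb : 0 ≤ b) (hc : 0 ≤ c)
    (he : 0 ≤ e) : (X * N ^ a) ^ b * (X * N ^ c) ^ e = X ^ (b + e) * N ^ (a * b + c * e) := by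
  rw [ENNReal.mul_rpow_of_nonneg _ _ hb, ENNReal.mul_rpow_of_nonneg _ _ he, ← ENNReal.rpow_mul,
    ← ENNReal.rpow_mul, ENNReal.rpow_add_of_nonneg _ _ hb he,
    ENNReal.rpow_add_of_nonneg _ _ (mul_nonneg ha hb) (mul_nonneg hc he)]
  ring

lemma eLpNorm_le_rpow_mul_eLpNorm_two_rpow {α ε : Type*} [MeasurableSpace α] [ENorm ε]
    {μ : Measure α} {f : α → ε} {M : ℝ≥0∞} (hM : M ≠ ∞) (hfM : ∀ x, ‖f x‖ₑ ≤ M)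
    {p : ℝ≥0∞} (hp : 2 ≤ p) (hp' : p ≠ ∞) :
    eLpNorm f p μ ≤ M ^ (1 - 2 / p.toReal) * eLpNorm f 2 μ ^ (2 / p.toReal) := by
  have hpR : 2 ≤ p.toReal := by simpa using ENNReal.toReal_mono hp' hp
  have hpow : ∀ x, ‖f x‖ₑ ^ p.toReal ≤ M ^ (p.toReal - 2) * ‖f x‖ₑ ^ (2:ℝ) := fun x => by
    rw [← sub_add_cancel p.toReal 2, ENNReal.rpow_add_of_nonneg _ _ (by linarith) zero_le_two,
      add_sub_cancel_right]
    gcongr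
    exact hfM x
  rw [eLpNorm_eq_lintegral_rpow_enorm_toReal (by positivity) hp',
    eLpNorm_eq_lintegral_rpow_enorm_toReal two_ne_zero ofNat_ne_top, toReal_ofNat,
    ← ENNReal.rpow_mul]
  calc (∫⁻ x, ‖f x‖ₑ ^ p.toReal ∂μ) ^ (1 / p.toReal)
      ≤ (M ^ (p.toReal - 2) * ∫⁻ x, ‖f x‖ₑ ^ (2:ℝ) ∂μ) ^ (1 / p.toReal) := by
        rw [← lintegral_const_mul' _ _ (ENNReal.rpow_ne_top_of_nonneg (by linarith) hM)]
        gcongr with x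
        exact hpow x
    _ = _ := by
        rw [ENNReal.mul_rpow_of_nonneg _ _ (by positivity), ← ENNReal.rpow_mul]
        congr 2 <;> field_simp

lemma eLpNorm_top_le_iSup {α : Type*} [MeasurableSpace α] (μ : Measure α) (v : α → ℝ≥0∞) :
    eLpNorm v ∞ μ ≤ ⨆ k, v k := by
  rw [eLpNorm_exponent_top, eLpNormEssSup]
  exact essSup_le_of_ae_le _ (Filter.Eventually.of_forall fun k => by
    simpa [enorm_eq_self] using le_iSup v k)

-- `eLpNorm g q (Measure.count.restrict s)` serves as the `ℓ^q`-norm of `g` over a finite set `s`.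
section CountingMeasure

variable {ι ε : Type*} [MeasurableSpace ι] [MeasurableSingletonClass ι] [ENorm ε]

lemma lintegral_count_restrict_finset (s : Finset ι) (g : ι → ℝ≥0∞) :
    ∫⁻ k in s, g k ∂Measure.count = ∑ k ∈ s, g k := by
  simp [lintegral_finset]

lemma eLpNorm_count_restrict_finset (s : Finset ι) (g : ι → ε) {q : ℝ≥0∞} (hq : q ≠ 0)
    (hq' : q ≠ ∞) :
    eLpNorm g q (Measure.count.restrict s) = (∑ k ∈ s, ‖g k‖ₑ ^ q.toReal) ^ (1 / q.toReal) := by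
  rw [eLpNorm_eq_lintegral_rpow_enorm_toReal hq hq', lintegral_count_restrict_finset]

lemma eLpNorm_one_count_restrict_finset (s : Finset ι) (g : ι → ε) :
    eLpNorm g 1 (Measure.count.restrict s) = ∑ k ∈ s, ‖g k‖ₑ := by
  simp [eLpNorm_count_restrict_finset s g one_ne_zero one_ne_top]

end CountingMeasure

lemma integrableOn_cube_of_continuous {d : ℕ} {E : Type*} [NormedAddCommGroup E]
    {g : (Fin d → ℝ) → E} (hg : Continuous g) : IntegrableOn g (cube d) :=
  (hg.integrableOn_Icc (a := 0) (b := 1)).mono_set fun _ hx =>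
    ⟨fun i => (hx i (Set.mem_univ i)).1, fun i => (hx i (Set.mem_univ i)).2.le⟩

lemma continuous_expk (d : ℕ) (k : Fin d → ℤ) : Continuous (expk d k) := by
  unfold expk
  fun_prop

lemma norm_expk (d : ℕ) (k : Fin d → ℤ) (x : Fin d → ℝ) : ‖expk d k x‖ = 1 :=
  Complex.norm_exp_ofReal_mul_I _

lemma expk_mul_expk (d : ℕ) (k l : Fin d → ℤ) (x : Fin d → ℝ) :
    expk d k x * expk d l x = expk d (k + l) x := by
  simp only [expk, ← Complex.exp_add, Pi.add_apply, Int.cast_add, add_mul,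
    Finset.sum_add_distrib]
  push_cast
  ring_nf

lemma conj_expk (d : ℕ) (k : Fin d → ℤ) (x : Fin d → ℝ) :
    (starRingEnd ℂ) (expk d k x) = expk d (-k) x := by
  simp only [expk, ← Complex.exp_conj, map_mul, Complex.conj_I, Complex.conj_ofReal,
    Pi.neg_apply, Int.cast_neg, neg_mul, Finset.sum_neg_distrib]
  push_cast
  ring_nf

lemma expk_eq_prod (d : ℕ) (k : Fin d → ℤ) (x : Fin d → ℝ) :
    expk d k x = ∏ i, Complex.exp (((2 * π * (k i * x i) : ℝ) : ℂ) * Complex.I) := by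
  rw [← Complex.exp_sum, expk, ← Finset.sum_mul, Finset.mul_sum]
  push_cast
  rfl

lemma setIntegral_Ico_exp_two_pi_int_mul (k : ℤ) :
    ∫ x in Set.Ico (0:ℝ) 1, Complex.exp (((2 * π * (k * x) : ℝ) : ℂ) * Complex.I)
      = if k = 0 then 1 else 0 := by
  split_ifs with hk
  · simp [hk]
  have hc : (2 * π * k * Complex.I : ℂ) ≠ 0 := by simp [Real.pi_ne_zero, hk]
  rw [Measure.restrict_congr_set Ico_ae_eq_Ioc, ← intervalIntegral.integral_of_le zero_le_one]
  simp_rw [show ∀ x : ℝ, (((2 * π * (k * x) : ℝ) : ℂ) * Complex.I)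
    = (2 * π * k * Complex.I : ℂ) * x from fun x => by push_cast; ring]
  rw [integral_exp_mul_complex hc, show (2 * π * k * Complex.I : ℂ) * ((1:ℝ) : ℂ)
    = k * (2 * π * Complex.I) by push_cast; ring, Complex.exp_int_mul_two_pi_mul_I]
  simp

lemma setIntegral_cube_expk (d : ℕ) (k : Fin d → ℤ) :
    ∫ x in cube d, expk d k x = if k = 0 then 1 else 0 := by
  simp_rw [cube, volume_pi, Measure.restrict_pi_pi, expk_eq_prod,
    integral_fintype_prod_eq_prod
      (fun i t => Complex.exp (((2 * π * (k i * t) : ℝ) : ℂ) * Complex.I)),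
    setIntegral_Ico_exp_two_pi_int_mul]
  split_ifs with hk
  · simp [hk]
  · obtain ⟨i, hi⟩ := Function.ne_iff.mp hk
    exact Finset.prod_eq_zero (Finset.mem_univ i) (if_neg hi)

def trigSum (d : ℕ) (Λ : Finset (Fin d → ℤ)) (a : (Fin d → ℤ) → ℂ) : (Fin d → ℝ) → ℂ :=
  fun x => ∑ k ∈ Λ, a k * expk d k x

section TrigSum

variable {d : ℕ} (Λ : Finset (Fin d → ℤ)) (a : (Fin d → ℤ) → ℂ)

lemma continuous_trigSum : Continuous (trigSum d Λ a) :=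
  continuous_finsetSum _ fun k _ => continuous_const.mul (continuous_expk d k)

lemma enorm_trigSum_le (x : Fin d → ℝ) : ‖trigSum d Λ a x‖ₑ ≤ ∑ k ∈ Λ, ‖a k‖ₑ :=
  (enorm_sum_le _ _).trans_eq <| Finset.sum_congr rfl fun k _ => by
    rw [enorm_mul, ← ofReal_norm (expk d k x), norm_expk, ENNReal.ofReal_one, mul_one]

lemma setIntegral_trigSum_mul_conj :
    ∫ x in cube d, trigSum d Λ a x * (starRingEnd ℂ) (trigSum d Λ a x)
      = ∑ k ∈ Λ, ((‖a k‖ ^ 2 : ℝ) : ℂ) := by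
  have hexpand : ∀ x, trigSum d Λ a x * (starRingEnd ℂ) (trigSum d Λ a x)
      = ∑ k ∈ Λ, ∑ l ∈ Λ, a k * (starRingEnd ℂ) (a l) * expk d (k + -l) x := fun x => by
    simp only [trigSum, map_sum, map_mul, conj_expk, Finset.sum_mul_sum, ← expk_mul_expk]
    exact Finset.sum_congr rfl fun k _ => Finset.sum_congr rfl fun l _ => by ring
  have hint : ∀ (c : ℂ) (n : Fin d → ℤ), IntegrableOn (fun x => c * expk d n x) (cube d) :=
    fun c n => integrableOn_cube_of_continuous (continuous_const.mul (continuous_expk d n))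
  simp_rw [hexpand]
  rw [integral_finsetSum _ fun k _ => integrable_finsetSum _ fun l _ => hint _ _]
  refine Finset.sum_congr rfl fun k hk => ?_
  simp_rw [integral_finsetSum _ fun l _ => hint _ _, integral_const_mul, setIntegral_cube_expk,
    add_neg_eq_zero, mul_ite, mul_one, mul_zero, Finset.sum_ite_eq Λ k, if_pos hk,
    Complex.mul_conj, Complex.normSq_eq_norm_sq]

lemma lintegral_enorm_trigSum_sq :
    ∫⁻ x in cube d, ‖trigSum d Λ a x‖ₑ ^ (2:ℝ) = ∑ k ∈ Λ, ‖a k‖ₑ ^ (2:ℝ) := by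
  have henorm : ∀ z : ℂ, ‖z‖ₑ ^ (2:ℝ) = ENNReal.ofReal (‖z‖ ^ 2) := fun z => by
    rw [← ofReal_norm, ENNReal.ofReal_rpow_of_nonneg (norm_nonneg _) zero_le_two, Real.rpow_two]
  have hint : IntegrableOn (fun x => ‖trigSum d Λ a x‖ ^ 2) (cube d) :=
    integrableOn_cube_of_continuous ((continuous_trigSum Λ a).norm.pow 2)
  have hreal : ∫ x in cube d, ‖trigSum d Λ a x‖ ^ 2 = ∑ k ∈ Λ, ‖a k‖ ^ 2 := by
    apply Complex.ofReal_injective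
    rw [← integral_complex_ofReal, Complex.ofReal_sum, ← setIntegral_trigSum_mul_conj]
    simp_rw [Complex.mul_conj, Complex.normSq_eq_norm_sq]
  simp_rw [henorm]
  rw [← ofReal_integral_eq_lintegral_ofReal hint (Filter.Eventually.of_forall fun _ => sq_nonneg _),
    hreal, ENNReal.ofReal_sum_of_nonneg fun _ _ => sq_nonneg _]

theorem LqNorm_two_trigSum :
    LqNorm d 2 (trigSum d Λ a) = eLpNorm a 2 (Measure.count.restrict Λ) := by
  rw [LqNorm, eLpNorm_count_restrict_finset Λ a two_ne_zero ofNat_ne_top,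
    eLpNorm_eq_lintegral_rpow_enorm_toReal two_ne_zero ofNat_ne_top, toReal_ofNat,
    lintegral_enorm_trigSum_sq]

lemma LqNorm_trigSum_le {p : ℝ≥0∞} (hp : 2 ≤ p) (hp' : p ≠ ∞) :
    LqNorm d p (trigSum d Λ a) ≤ eLpNorm a 1 (Measure.count.restrict Λ) ^ (1 - 2 / p.toReal)
      * eLpNorm a 2 (Measure.count.restrict Λ) ^ (2 / p.toReal) := by
  rw [← LqNorm_two_trigSum, LqNorm, eLpNorm_one_count_restrict_finset]
  exact eLpNorm_le_rpow_mul_eLpNorm_two_rpow (ENNReal.sum_ne_top.2 fun _ _ => enorm_ne_top)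
    (enorm_trigSum_le Λ a) hp hp'

-- For `θ = ∞` the exponent is right because `θ.toReal = 0` and `1 / 0 = 0`.
theorem LqNorm_trigSum_le_card_rpow_mul_eLpNorm {p θ : ℝ≥0∞} (hp : 2 ≤ p) (hp' : p ≠ ∞)
    (hθ : 2 ≤ θ) :
    LqNorm d p (trigSum d Λ a) ≤ (Λ.card : ℝ≥0∞) ^ (1 - 1 / p.toReal - 1 / θ.toReal)
      * eLpNorm a θ (Measure.count.restrict Λ) := by
  set μ := Measure.count.restrict (Λ : Set (Fin d → ℤ))
  have hμ : μ Set.univ = Λ.card := by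
    rw [Measure.restrict_apply_univ, Measure.count_apply_finset]
  have hpR : 2 ≤ p.toReal := by simpa using ENNReal.toReal_mono hp' hp
  have hθR := one_div_toReal_le_half hθ
  have hone := eLpNorm_le_eLpNorm_mul_rpow_measure_univ (one_le_two.trans hθ)
    (AEStronglyMeasurable.of_discrete (f := a) (μ := μ))
  have htwo := eLpNorm_le_eLpNorm_mul_rpow_measure_univ hθ
    (AEStronglyMeasurable.of_discrete (f := a) (μ := μ))
  rw [hμ, toReal_one] at hone
  rw [hμ, toReal_ofNat] at htwo
  have h2p : 2 / p.toReal ≤ 1 := (div_le_one (by linarith)).2 hpR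
  calc LqNorm d p (trigSum d Λ a)
      ≤ eLpNorm a 1 μ ^ (1 - 2 / p.toReal) * eLpNorm a 2 μ ^ (2 / p.toReal) :=
        LqNorm_trigSum_le Λ a hp hp'
    _ ≤ (eLpNorm a θ μ * (Λ.card : ℝ≥0∞) ^ (1 / 1 - 1 / θ.toReal)) ^ (1 - 2 / p.toReal)
        * (eLpNorm a θ μ * (Λ.card : ℝ≥0∞) ^ (1 / 2 - 1 / θ.toReal)) ^ (2 / p.toReal) := by
        gcongr
    _ = _ := by
        rw [mul_rpow_mul_mul_rpow _ _ (by linarith) (by linarith) (by linarith) (by positivity),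
          mul_comm]
        congr 2
        · field_simp
          ring
        · simp

end TrigSum

lemma mem_blockF_iff {n : ℕ} {k : ℤ} : k ∈ blockF n ↔ k.natAbs.size = n := by
  simp only [blockF, Finset.mem_filter, Finset.mem_Icc, Int.abs_eq_natAbs]
  rcases Nat.eq_zero_or_pos n with rfl | hn
  · simp only [Nat.size_eq_zero, Int.natAbs_eq_zero, true_and, ne_eq, not_true_eq_false,
      false_and, or_false]
    constructor
    · exact fun h => h.2
    · rintro rfl; norm_num
  · have hlow : (2:ℤ) ^ (n - 1) ≤ k.natAbs ↔ n - 1 < k.natAbs.size := by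
      rw [Nat.lt_size]; exact_mod_cast Iff.rfl
    have hup : (k.natAbs : ℤ) < 2 ^ n ↔ k.natAbs.size ≤ n := by
      rw [Nat.size_le]; exact_mod_cast Iff.rfl
    rw [hlow, hup]
    constructor
    · rintro ⟨-, ⟨rfl, -⟩ | ⟨-, hlow, hup⟩⟩ <;> omega
    · intro h
      have hk : (k.natAbs : ℤ) < 2 ^ n := hup.2 h.le
      rw [← Int.abs_eq_natAbs, abs_lt] at hk
      exact ⟨⟨hk.1.le, hk.2.le⟩, Or.inr ⟨hn.ne', by omega, h.le⟩⟩

lemma card_blockF_le (n : ℕ) : (blockF n).card ≤ 2 ^ (n + 2) := by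
  have h : (2:ℤ) ^ n = ((2 ^ n : ℕ) : ℤ) := by push_cast; rfl
  calc (blockF n).card ≤ (Finset.Icc (-(2 ^ n : ℤ)) (2 ^ n)).card :=
        Finset.card_le_card (Finset.filter_subset _ _)
    _ = 2 * 2 ^ n + 1 := by rw [Int.card_Icc, h]; omega
    _ ≤ 2 ^ (n + 2) := by rw [pow_add]; have := Nat.one_le_two_pow (n := n); omega

lemma two_pow_le_two_mul_one_add_abs {n : ℕ} {k : ℤ} (hk : k ∈ blockF n) :
    (2:ℝ) ^ n ≤ 2 * (1 + |(k:ℝ)|) := by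
  rcases (Finset.mem_filter.1 hk).2 with ⟨rfl, rfl⟩ | ⟨hn, hlow, -⟩
  · norm_num
  · have hlowR : (2:ℝ) ^ (n - 1) ≤ |(k:ℝ)| := by exact_mod_cast hlow
    rw [← Nat.sub_add_cancel (Nat.one_le_iff_ne_zero.2 hn), pow_succ]
    linarith

lemma wt_pos (d : ℕ) (k : Fin d → ℤ) : 0 < wt d k :=
  Finset.prod_pos fun _ _ => by positivity

lemma tsum_sum_piFinset_blockF {d : ℕ} (h : (Fin d → ℤ) → ℝ≥0∞) :
    ∑' j : Fin d → ℕ, ∑ k ∈ Fintype.piFinset (fun i => blockF (j i)), h k = ∑' k, h k := by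
  rw [← ENNReal.tsum_fiberwise h fun k i => (k i).natAbs.size]
  refine tsum_congr fun j => ?_
  have hfiber : ((Fintype.piFinset fun i => blockF (j i) : Finset _) : Set (Fin d → ℤ))
      = (fun k i => (k i).natAbs.size) ⁻¹' {j} := by
    ext k
    simp [mem_blockF_iff, funext_iff]
  rw [← Finset.tsum_subtype', hfiber]

section DyadicBoxes

variable {d : ℕ} (j : Fin d → ℕ)

lemma card_piFinset_blockF_le :
    ((Fintype.piFinset fun i => blockF (j i)).card : ℝ≥0∞)
      ≤ 2 ^ (((∑ i, j i : ℕ) : ℝ) + 2 * d) := by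
  have h : (Fintype.piFinset fun i => blockF (j i)).card ≤ 2 ^ (∑ i, j i + 2 * d) := by
    rw [Fintype.card_piFinset]
    calc ∏ i, (blockF (j i)).card ≤ ∏ i, 2 ^ (j i + 2) :=
          Finset.prod_le_prod' fun i _ => card_blockF_le (j i)
      _ = 2 ^ (∑ i, j i + 2 * d) := by
          rw [Finset.prod_pow_eq_pow_sum, Finset.sum_add_distrib]
          simp [mul_comm]
  calc ((Fintype.piFinset fun i => blockF (j i)).card : ℝ≥0∞)
      ≤ ((2 ^ (∑ i, j i + 2 * d) : ℕ) : ℝ≥0∞) := by exact_mod_cast h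
    _ = _ := by rw [Nat.cast_pow, ← ENNReal.rpow_natCast]; push_cast; rfl

lemma two_pow_le_two_pow_mul_wt {k : Fin d → ℤ} (hk : k ∈ Fintype.piFinset fun i => blockF (j i)) :
    (2:ℝ) ^ (∑ i, j i) ≤ 2 ^ d * wt d k := by
  rw [Fintype.mem_piFinset] at hk
  calc (2:ℝ) ^ (∑ i, j i) = ∏ i, (2:ℝ) ^ j i := (Finset.prod_pow_eq_pow_sum _ _ _).symm
    _ ≤ ∏ i, 2 * (1 + |(k i : ℝ)|) :=
        Finset.prod_le_prod (fun _ _ => by positivity) fun i _ =>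
          two_pow_le_two_mul_one_add_abs (hk i)
    _ = 2 ^ d * wt d k := by simp [Finset.prod_mul_distrib, wt]

end DyadicBoxes

def weightedCoeff (d : ℕ) (s : ℝ) (f : (Fin d → ℝ) → ℂ) (k : Fin d → ℤ) : ℝ≥0∞ :=
  ENNReal.ofReal (wt d k ^ s) * (‖fCoeff d f k‖₊ : ℝ≥0∞)

lemma enorm_fCoeff_le_weightedCoeff {d : ℕ} {j : Fin d → ℕ} {k : Fin d → ℤ}
    (hk : k ∈ Fintype.piFinset fun i => blockF (j i)) {s : ℝ} (hs : 0 ≤ s)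
    (f : (Fin d → ℝ) → ℂ) :
    ‖fCoeff d f k‖ₑ ≤ 2 ^ ((d - ((∑ i, j i : ℕ) : ℝ)) * s) * weightedCoeff d s f k := by
  have hwt := wt_pos d k
  have hpow : (2:ℝ) ^ (((∑ i, j i : ℕ) : ℝ) * s) ≤ 2 ^ ((d:ℝ) * s) * wt d k ^ s := by
    have := Real.rpow_le_rpow (by positivity) (two_pow_le_two_pow_mul_wt j hk) hs
    rwa [Real.mul_rpow (by positivity) hwt.le, ← Real.rpow_natCast, ← Real.rpow_natCast,
      ← Real.rpow_mul zero_le_two, ← Real.rpow_mul zero_le_two] at this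
  have hone : 1 ≤ (2:ℝ) ^ ((d - ((∑ i, j i : ℕ) : ℝ)) * s) * wt d k ^ s := by
    rwa [sub_mul, Real.rpow_sub two_pos, div_mul_eq_mul_div, le_div_iff₀ (by positivity),
      one_mul]
  calc ‖fCoeff d f k‖ₑ = 1 * ‖fCoeff d f k‖ₑ := (one_mul _).symm
    _ ≤ ENNReal.ofReal ((2:ℝ) ^ ((d - ((∑ i, j i : ℕ) : ℝ)) * s) * wt d k ^ s)
        * ‖fCoeff d f k‖ₑ := by
        gcongr
        exact ENNReal.one_le_ofReal.2 hone
    _ = _ := by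
        rw [ENNReal.ofReal_mul (by positivity), ofReal_two_rpow, mul_assoc, weightedCoeff,
          enorm_eq_nnnorm]

theorem LqNorm_blockProj_le {d : ℕ} (f : (Fin d → ℝ) → ℂ) (j : Fin d → ℕ) {p θ : ℝ≥0∞}
    (hp : 2 ≤ p) (hp' : p ≠ ∞) (hθ : 2 ≤ θ) {s : ℝ} (hs : 0 ≤ s) :
    LqNorm d p (blockProj d f j)
      ≤ 2 ^ ((((∑ i, j i : ℕ) : ℝ) + 2 * d) * (1 - 1 / p.toReal - 1 / θ.toReal)
          + (d - ((∑ i, j i : ℕ) : ℝ)) * s)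
        * eLpNorm (weightedCoeff d s f) θ
            (Measure.count.restrict (Fintype.piFinset fun i => blockF (j i))) := by
  set I := Fintype.piFinset fun i => blockF (j i)
  have hσ : 0 ≤ 1 - 1 / p.toReal - 1 / θ.toReal := by
    linarith [one_div_toReal_le_half hp, one_div_toReal_le_half hθ]
  have hcoeff : eLpNorm (fCoeff d f) θ (Measure.count.restrict I)
      ≤ 2 ^ ((d - ((∑ i, j i : ℕ) : ℝ)) * s)
        * eLpNorm (weightedCoeff d s f) θ (Measure.count.restrict I) :=
    eLpNorm_le_mul_eLpNorm_of_ae_le_mul'' θ AEStronglyMeasurable.of_discrete <|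
      ae_restrict_of_forall_mem I.measurableSet fun k hk => by
        rw [enorm_eq_self]
        exact enorm_fCoeff_le_weightedCoeff hk hs f
  calc LqNorm d p (blockProj d f j)
      ≤ (I.card : ℝ≥0∞) ^ (1 - 1 / p.toReal - 1 / θ.toReal)
        * eLpNorm (fCoeff d f) θ (Measure.count.restrict I) :=
        LqNorm_trigSum_le_card_rpow_mul_eLpNorm I (fCoeff d f) hp hp' hθ
    _ ≤ (2 ^ (((∑ i, j i : ℕ) : ℝ) + 2 * d)) ^ (1 - 1 / p.toReal - 1 / θ.toReal)
        * (2 ^ ((d - ((∑ i, j i : ℕ) : ℝ)) * s)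
          * eLpNorm (weightedCoeff d s f) θ (Measure.count.restrict I)) := by
        gcongr
        exact card_piFinset_blockF_le j
    _ = _ := by
        rw [← ENNReal.rpow_mul, ← mul_assoc, ← ENNReal.rpow_add _ _ two_ne_zero ofNat_ne_top]

theorem rpow_mul_LqNorm_blockProj_le {d : ℕ} (f : (Fin d → ℝ) → ℂ) (j : Fin d → ℕ)
    {p θ : ℝ≥0∞} (hp : 2 ≤ p) (hp' : p ≠ ∞) (hθ : 2 ≤ θ) {r : ℝ} (hr : 0 ≤ r) :
    ENNReal.ofReal ((2:ℝ) ^ (((∑ i, j i : ℕ) : ℝ) * r)) * LqNorm d p (blockProj d f j)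
      ≤ 2 ^ (d * r + 3 * d * (1 - 1 / p.toReal - 1 / θ.toReal))
        * eLpNorm (weightedCoeff d (r + 1 - 1 / p.toReal - 1 / θ.toReal) f) θ
            (Measure.count.restrict (Fintype.piFinset fun i => blockF (j i))) := by
  have hs : 0 ≤ r + 1 - 1 / p.toReal - 1 / θ.toReal := by
    linarith [one_div_toReal_le_half hp, one_div_toReal_le_half hθ]
  rw [ofReal_two_rpow]
  refine (mul_le_mul_right (LqNorm_blockProj_le f j hp hp' hθ hs) _).trans_eq ?_
  rw [← mul_assoc, ← ENNReal.rpow_add _ _ two_ne_zero ofNat_ne_top]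
  congr 2
  ring

theorem besovNorm_le_mul_wienerNorm_of_forall_block_le {d : ℕ} {r s : ℝ} {p θ : ℝ≥0∞}
    {f : (Fin d → ℝ) → ℂ} {C : ℝ≥0∞} (hθ : θ ≠ 0)
    (h : ∀ j : Fin d → ℕ,
      ENNReal.ofReal ((2:ℝ) ^ (((∑ i, j i : ℕ) : ℝ) * r)) * LqNorm d p (blockProj d f j)
        ≤ C * eLpNorm (weightedCoeff d s f) θ
            (Measure.count.restrict (Fintype.piFinset fun i => blockF (j i)))) :
    besovNorm d r p θ f ≤ C * wienerNorm d s θ f := by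
  rw [besovNorm, wienerNorm]
  split_ifs with hθ'
  · subst hθ'
    exact iSup_le fun j => (h j).trans (by gcongr; exact eLpNorm_top_le_iSup _ _)
  have hτ : 0 < θ.toReal := ENNReal.toReal_pos hθ hθ'
  have hblock : ∀ j : Fin d → ℕ,
      eLpNorm (weightedCoeff d s f) θ
          (Measure.count.restrict (Fintype.piFinset fun i => blockF (j i))) ^ θ.toReal
        = ∑ k ∈ Fintype.piFinset (fun i => blockF (j i)), weightedCoeff d s f k ^ θ.toReal :=
    fun j => by
      rw [eLpNorm_count_restrict_finset _ _ hθ hθ', ← ENNReal.rpow_mul, one_div_mul_cancel hτ.ne',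
        ENNReal.rpow_one]
      simp only [enorm_eq_self]
  calc (∑' j : Fin d → ℕ, (ENNReal.ofReal ((2:ℝ) ^ (((∑ i, j i : ℕ) : ℝ) * r))
          * LqNorm d p (blockProj d f j)) ^ θ.toReal) ^ (1 / θ.toReal)
      ≤ (∑' j : Fin d → ℕ, (C * eLpNorm (weightedCoeff d s f) θ
          (Measure.count.restrict (Fintype.piFinset fun i => blockF (j i)))) ^ θ.toReal)
          ^ (1 / θ.toReal) :=
        ENNReal.rpow_le_rpow (ENNReal.tsum_le_tsum fun j => ENNReal.rpow_le_rpow (h j) hτ.le)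
          (by positivity)
    _ = C * (∑' k, weightedCoeff d s f k ^ θ.toReal) ^ (1 / θ.toReal) := by
        simp_rw [ENNReal.mul_rpow_of_nonneg _ _ hτ.le, hblock, ENNReal.tsum_mul_left,
          tsum_sum_piFinset_blockF]
        rw [ENNReal.mul_rpow_of_nonneg _ _ (by positivity), ← ENNReal.rpow_mul,
          mul_one_div_cancel hτ.ne', ENNReal.rpow_one]

theorem statement10_general (d : ℕ) (p θ : ℝ≥0∞) (hp1 : 2 ≤ p) (hp2 : p ≠ ∞)
    (hθ : 2 ≤ θ) (r : ℝ) (hr : 0 ≤ r) :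
    ∃ C : ℝ, 0 < C ∧ ∀ f : (Fin d → ℝ) → ℂ, IntegrableOn f (cube d) →
      besovNorm d r p θ f ≤
        ENNReal.ofReal C * wienerNorm d (r + 1 - 1/p.toReal - 1/θ.toReal) θ f := by
  refine ⟨2 ^ (d * r + 3 * d * (1 - 1 / p.toReal - 1 / θ.toReal)), by positivity, fun f _ => ?_⟩
  rw [ofReal_two_rpow]
  exact besovNorm_le_mul_wienerNorm_of_forall_block_le (by positivity) fun j =>
    rpow_mul_LqNorm_blockProj_le f j hp1 hp2 hθ hr

/-- the embedding `S^{r+1-1/p-1/θ}_θ A ↪ S^r_{p,θ}B`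
for `2 ≤ p < ∞`, `2 ≤ θ ≤ ∞`, `r ≥ 0`. -/
theorem statement10 (d : ℕ) (hd : 1 ≤ d) (p θ : ℝ≥0∞) (hp1 : 2 ≤ p) (hp2 : p ≠ ∞)
    (hθ : 2 ≤ θ) (r : ℝ) (hr : 0 ≤ r) :
    ∃ C : ℝ, 0 < C ∧ ∀ f : (Fin d → ℝ) → ℂ, IntegrableOn f (cube d) →
      besovNorm d r p θ f ≤
        ENNReal.ofReal C * wienerNorm d (r + 1 - 1/p.toReal - 1/θ.toReal) θ f :=
  statement10_general d p θ hp1 hp2 hθ r hr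

end Paper
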